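/- arXiv:1703.09801 — 2 statements merged into one kernel-verified Lean document; each statement's English description precedes it below -/
import Mathlib

section
/- Let N ≥ 1. There exists a constant C_N > 0 depending only on N such that for every locally integrable f : ℝ^N → ℂ, every r > 0, and every nonnegative measurable function ρ : (0,∞) → [0,∞) with ∫_0^∞ ρ(s) s^{N−1} ds = 1, one has for almost every x ∈ ℝ^N: ∫_{B_x(r)} ∫_0^1 |f(t(y−x)+x)| ρ(|y−x|) dt dy ≤ C_N M(f)(x), where B_x(r) is the open ball of center x and radius r and M(f)(x) := sup_{s>0} (1/|B_x(s)|) ∫_{B_x(s)} |f(y)| dy is the Hardy–Littlewood maximal function of f. -/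
/-!
Translate to `x = 0` and write `g = ‖f(x + ·)‖`. In polar coordinates `w = s ω` the left side is
`∫₀^∞ ρ(s) s^{N-1} (∫_{S^{N-1}} ∫₀¹ g(t s ω) dt dω) ds`, so it suffices to bound the spherical ray
averages `∫_S ∫₀¹ g(t s ω) dt dω` by `N |B₁| M(f)(x)` uniformly in `s > 0`. Substituting `u = t s`
and undoing polar coordinates, such an average is `s⁻¹ ∫_{|w| ≤ s} g(w) |w|^{1-N} dw`: an integral
of `g` against a radially decreasing kernel of total mass `N |B₁| s`. By the layer-cake formula it
is a superposition of integrals of `g` over balls centred at `0`, each at most `M(f)(x)` times the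
volume of the ball.
-/

open MeasureTheory Metric Set
open scoped ENNReal

noncomputable section

/-- The Hardy–Littlewood maximal function `M(f)(x) = sup_{s>0} (1/|B_x(s)|) ∫_{B_x(s)} |f|`. -/
def maxFn {N : ℕ} (f : EuclideanSpace ℝ (Fin N) → ℂ) (x : EuclideanSpace ℝ (Fin N)) : ℝ≥0∞ :=
  ⨆ (s : ℝ) (_ : 0 < s),
    (volume (ball x s))⁻¹ * ∫⁻ y in ball x s, (‖f y‖₊ : ℝ≥0∞)

theorem setLIntegral_Ioc_comp_mul_left {c : ℝ} (hc : 0 < c) {h : ℝ → ℝ≥0∞} (hh : Measurable h)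
    (a b : ℝ) :
    ∫⁻ t in Ioc a b, h (c * t) = (ENNReal.ofReal c)⁻¹ * ∫⁻ u in Ioc (c * a) (c * b), h u := by
  have hvol : ENNReal.ofReal c • Measure.map (c * ·) volume = (volume : Measure ℝ) := by
    rw [Real.map_volume_mul_left hc.ne', smul_smul, ← ENNReal.ofReal_mul hc.le,
      abs_of_pos (inv_pos.2 hc), mul_inv_cancel₀ hc.ne', ENNReal.ofReal_one, one_smul]
  have hpre : (c * ·) ⁻¹' Ioc (c * a) (c * b) = Ioc a b := by
    rw [preimage_const_mul_Ioc₀ _ _ hc, mul_div_cancel_left₀ _ hc.ne',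
      mul_div_cancel_left₀ _ hc.ne']
  have hscale :
      ∫⁻ u in Ioc (c * a) (c * b), h u = ENNReal.ofReal c * ∫⁻ t in Ioc a b, h (c * t) := by
    conv_lhs => rw [← hvol]
    rw [Measure.restrict_smul, lintegral_smul_measure,
      setLIntegral_map measurableSet_Ioc hh (measurable_const_mul c), hpre, smul_eq_mul]
  rw [hscale, ← mul_assoc, ENNReal.inv_mul_cancel (by simp [hc]) ENNReal.ofReal_ne_top, one_mul]

theorem setLIntegral_ball_eq_setLIntegral_ball_zero {G : Type*} [SeminormedAddCommGroup G]
    [MeasurableSpace G] [OpensMeasurableSpace G] [MeasurableAdd G] (μ : Measure G)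
    [μ.IsAddLeftInvariant] (F : G → ℝ≥0∞) (x : G) (r : ℝ) :
    ∫⁻ y in ball x r, F y ∂μ = ∫⁻ w in ball 0 r, F (x + w) ∂μ := by
  rw [← lintegral_indicator measurableSet_ball, ← lintegral_indicator measurableSet_ball,
    ← lintegral_add_left_eq_self _ x]
  congr with w
  simp [indicator, mem_ball, dist_eq_norm]

theorem AEMeasurable.exists_measurable_ge_ae_eq {α : Type*} [MeasurableSpace α] {μ : Measure α}
    {f : α → ℝ≥0∞} (hf : AEMeasurable f μ) :
    ∃ g : α → ℝ≥0∞, Measurable g ∧ f ≤ g ∧ f =ᵐ[μ] g := by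
  set D := toMeasurable μ {x | f x ≠ hf.mk f x}
  have hD : μ D = 0 := by rw [measure_toMeasurable]; exact hf.ae_eq_mk
  refine ⟨hf.mk f + D.indicator (fun _ => ∞),
    hf.measurable_mk.add (measurable_const.indicator (measurableSet_toMeasurable _ _)),
    fun x => ?_, ?_⟩
  · by_cases hx : x ∈ D
    · simp [hx]
    · simpa [hx] using (not_not.1 fun h => hx (subset_toMeasurable _ _ h)).le
  · filter_upwards [hf.ae_eq_mk, measure_eq_zero_iff_ae_notMem.1 hD] with x hx hxD
    simp [hxD, hx]

theorem lintegral_ofReal_eq_one_of_integral_eq_one {α : Type*} [MeasurableSpace α]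
    {μ : Measure α} {F : α → ℝ} (hF : 0 ≤ᵐ[μ] F) (h : ∫ a, F a ∂μ = 1) :
    ∫⁻ a, ENNReal.ofReal (F a) ∂μ = 1 := by
  rw [← ofReal_integral_eq_lintegral_ofReal (Integrable.of_integral_ne_zero (h ▸ one_ne_zero)) hF,
    h, ENNReal.ofReal_one]

def rayKernel (d : ℕ) (s : ℝ) : ℝ → ℝ := (Ioc 0 s).indicator fun u => (u ^ (d - 1))⁻¹

theorem measurable_rayKernel (d : ℕ) (s : ℝ) : Measurable (rayKernel d s) :=
  (by fun_prop : Measurable fun u : ℝ => (u ^ (d - 1))⁻¹).indicator measurableSet_Ioc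

theorem rayKernel_nonneg (d : ℕ) (s u : ℝ) : 0 ≤ rayKernel d s u :=
  indicator_nonneg (fun _ hu => inv_nonneg.2 (pow_nonneg hu.1.le _)) u

theorem rayKernel_of_lt {d : ℕ} {s u : ℝ} (h : s < u) : rayKernel d s u = 0 :=
  indicator_of_notMem (fun hu => h.not_ge hu.2) _

theorem antitoneOn_rayKernel (d : ℕ) (s : ℝ) : AntitoneOn (rayKernel d s) (Ioi 0) := by
  intro a ha b hb hab
  by_cases hbs : b ≤ s
  · rw [rayKernel, indicator_of_mem (show b ∈ Ioc 0 s from ⟨hb, hbs⟩),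
      indicator_of_mem (show a ∈ Ioc 0 s from ⟨ha, hab.trans hbs⟩)]
    exact inv_anti₀ (pow_pos ha _) (pow_le_pow_left₀ ha.le hab _)
  · rw [rayKernel_of_lt (not_le.1 hbs)]
    exact rayKernel_nonneg d s a

theorem ofReal_pow_mul_ofReal_rayKernel (d : ℕ) (s : ℝ) {u : ℝ} (hu : 0 < u) :
    ENNReal.ofReal (u ^ (d - 1)) * ENNReal.ofReal (rayKernel d s u) = (Ioc 0 s).indicator 1 u := by
  by_cases hus : u ≤ s
  · have hmem : u ∈ Ioc 0 s := ⟨hu, hus⟩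
    rw [rayKernel, indicator_of_mem hmem, indicator_of_mem hmem,
      ← ENNReal.ofReal_mul (pow_nonneg hu.le _), mul_inv_cancel₀ (pow_pos hu _).ne',
      ENNReal.ofReal_one, Pi.one_apply]
  · rw [rayKernel_of_lt (not_le.1 hus), indicator_of_notMem (fun h => hus h.2),
      ENNReal.ofReal_zero, mul_zero]

section Polar

variable {E : Type*} [NormedAddCommGroup E] [NormedSpace ℝ E] [FiniteDimensional ℝ E]
  [MeasurableSpace E] [BorelSpace E] [Nontrivial E] (μ : Measure E) [μ.IsAddHaarMeasure]

local notation "dim" => Module.finrank ℝ E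

theorem lintegral_eq_lintegral_toSphere {h : E → ℝ≥0∞} (hh : Measurable h) :
    ∫⁻ w, h w ∂μ = ∫⁻ ω : sphere (0 : E) 1,
      (∫⁻ s in Ioi (0 : ℝ), ENNReal.ofReal (s ^ (dim - 1)) * h (s • (ω : E))) ∂μ.toSphere := by
  have hF : Measurable fun p : sphere (0 : E) 1 × Ioi (0 : ℝ) => h (p.2.1 • (p.1 : E)) := by
    fun_prop
  calc ∫⁻ w, h w ∂μ = ∫⁻ w : ({0}ᶜ : Set E), h w ∂μ.comap (↑) := by
        rw [lintegral_subtype_comap (measurableSet_singleton _).compl,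
          restrict_compl_singleton]
    _ = ∫⁻ p, h (p.2.1 • (p.1 : E)) ∂μ.toSphere.prod (Measure.volumeIoiPow (dim - 1)) := by
        rw [← μ.measurePreserving_homeomorphUnitSphereProd.lintegral_comp_emb
          (Homeomorph.measurableEmbedding _)]
        congr with w
        simp [smul_inv_smul₀ (norm_ne_zero_iff.2 w.2)]
    _ = _ := by
        rw [lintegral_prod _ hF.aemeasurable]
        congr with ω
        rw [Measure.volumeIoiPow, lintegral_withDensity_eq_lintegral_mul _ (by fun_prop)
          (by fun_prop), ← lintegral_subtype_comap measurableSet_Ioi]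
        rfl

variable {g : E → ℝ≥0∞} {M : ℝ≥0∞}

theorem setLIntegral_le_mul_measure_of_radial
    (hball : ∀ s > 0, ∫⁻ w in ball 0 s, g w ∂μ ≤ M * μ (ball 0 s))
    {S : Set E} (hSb : Bornology.IsBounded S) (hS : ∀ w ∈ S, ∀ v ≠ 0, ‖v‖ ≤ ‖w‖ → v ∈ S) :
    ∫⁻ w in S, g w ∂μ ≤ M * μ S := by
  by_cases hS0 : S ⊆ {0}
  · rw [Measure.restrict_eq_zero.2 (measure_mono_null hS0 (measure_singleton 0)),
      lintegral_zero_measure]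
    exact zero_le
  obtain ⟨w₀, hw₀S, hw₀⟩ := not_subset.1 hS0
  obtain ⟨C, hC⟩ := hSb.exists_norm_le
  have hbdd : BddAbove (norm '' S) := ⟨C, by rintro _ ⟨w, hw, rfl⟩; exact hC w hw⟩
  set R := sSup (norm '' S)
  have hR : 0 < R :=
    (norm_pos_iff.2 hw₀).trans_le (le_csSup hbdd (mem_image_of_mem _ hw₀S))
  have hSR : S ⊆ closedBall 0 R := fun w hw =>
    mem_closedBall_zero_iff.2 (le_csSup hbdd (mem_image_of_mem _ hw))
  have hRS : ball 0 R \ {0} ⊆ S := by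
    rintro v ⟨hv, hv0⟩
    obtain ⟨_, ⟨w, hw, rfl⟩, hvw⟩ :=
      exists_lt_of_lt_csSup ⟨_, mem_image_of_mem _ hw₀S⟩ (mem_ball_zero_iff.1 hv)
    exact hS w hw v hv0 hvw.le
  have hclosed : closedBall (0 : E) R =ᵐ[μ] ball 0 R :=
    (ae_eq_of_subset_of_measure_ge ball_subset_closedBall
      (μ.addHaar_closedBall_eq_addHaar_ball 0 R).le measurableSet_ball.nullMeasurableSet
      measure_closedBall_lt_top.ne).symm
  calc ∫⁻ w in S, g w ∂μ ≤ ∫⁻ w in closedBall 0 R, g w ∂μ := lintegral_mono_set hSR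
    _ = ∫⁻ w in ball 0 R, g w ∂μ := by rw [Measure.restrict_congr_set hclosed]
    _ ≤ M * μ (ball 0 R) := hball R hR
    _ = M * μ (ball 0 R \ {0}) := by rw [measure_sdiff_null (measure_singleton 0)]
    _ ≤ M * μ S := by gcongr

theorem lintegral_mul_radial_le (hg : Measurable g)
    (hball : ∀ s > 0, ∫⁻ w in ball 0 s, g w ∂μ ≤ M * μ (ball 0 s))
    {ψ : ℝ → ℝ} (hψm : Measurable ψ) (hψ0 : ∀ u, 0 ≤ ψ u) (hψa : AntitoneOn ψ (Ioi 0))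
    {r : ℝ} (hψr : ∀ u, r < u → ψ u = 0) :
    ∫⁻ w, g w * ENNReal.ofReal (ψ ‖w‖) ∂μ ≤ M * ∫⁻ w, ENNReal.ofReal (ψ ‖w‖) ∂μ := by
  have hψnm : Measurable fun w : E => ψ ‖w‖ := hψm.comp measurable_norm
  have hlevel : ∀ t > 0, ∫⁻ w in {w | t < ψ ‖w‖}, g w ∂μ ≤ M * μ {w | t < ψ ‖w‖} := by
    intro t ht
    refine setLIntegral_le_mul_measure_of_radial μ hball ?_ fun w hw v hv0 hvw => ?_
    · refine (isBounded_closedBall (x := (0 : E)) (r := r)).subset fun w hw => ?_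
      by_contra hwr
      have hψw : ψ ‖w‖ = 0 := hψr _ (by simpa using hwr)
      exact (ht.trans (hψw ▸ hw : t < 0)).false
    · exact lt_of_lt_of_le hw (hψa (norm_pos_iff.2 hv0) ((norm_pos_iff.2 hv0).trans_le hvw) hvw)
  calc ∫⁻ w, g w * ENNReal.ofReal (ψ ‖w‖) ∂μ
      = ∫⁻ w, ENNReal.ofReal (ψ ‖w‖) ∂μ.withDensity g :=
        (lintegral_withDensity_eq_lintegral_mul _ hg hψnm.ennreal_ofReal).symm
    _ = ∫⁻ t in Ioi (0 : ℝ), μ.withDensity g {w | t < ψ ‖w‖} :=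
        lintegral_eq_lintegral_meas_lt _ (ae_of_all _ fun _ => hψ0 _) hψnm.aemeasurable
    _ ≤ ∫⁻ t in Ioi (0 : ℝ), M * μ {w | t < ψ ‖w‖} := by
        refine setLIntegral_mono' measurableSet_Ioi fun t ht => ?_
        rw [withDensity_apply _ (measurableSet_lt measurable_const hψnm)]
        exact hlevel t ht
    _ = M * ∫⁻ w, ENNReal.ofReal (ψ ‖w‖) ∂μ := by
        have hanti : Antitone fun t : ℝ => μ {w | t < ψ ‖w‖} := fun t t' htt' =>
          measure_mono fun w hw => htt'.trans_lt hw
        rw [lintegral_const_mul _ hanti.measurable,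
          lintegral_eq_lintegral_meas_lt _ (ae_of_all _ fun _ => hψ0 _) hψnm.aemeasurable]

theorem lintegral_mul_rayKernel (hg : Measurable g) (s : ℝ) :
    ∫⁻ w, g w * ENNReal.ofReal (rayKernel dim s ‖w‖) ∂μ
      = ∫⁻ ω : sphere (0 : E) 1, (∫⁻ u in Ioc (0 : ℝ) s, g (u • (ω : E))) ∂μ.toSphere := by
  have hK : Measurable fun w : E => ENNReal.ofReal (rayKernel dim s ‖w‖) :=
    ((measurable_rayKernel _ _).comp measurable_norm).ennreal_ofReal
  rw [lintegral_eq_lintegral_toSphere μ (h := fun w => g w * _) (hg.mul hK)]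
  refine lintegral_congr fun ω => ?_
  rw [← inter_eq_left.2 (Ioc_subset_Ioi_self : Ioc (0 : ℝ) s ⊆ Ioi 0),
    ← setLIntegral_indicator measurableSet_Ioc]
  refine setLIntegral_congr_fun measurableSet_Ioi fun u hu => ?_
  rw [norm_smul, norm_eq_of_mem_sphere ω, mul_one, Real.norm_of_nonneg (le_of_lt hu),
    mul_left_comm, ofReal_pow_mul_ofReal_rayKernel _ _ hu]
  by_cases hus : u ∈ Ioc 0 s <;> simp [hus]

theorem lintegral_rayKernel (s : ℝ) :
    ∫⁻ w, ENNReal.ofReal (rayKernel dim s ‖w‖) ∂μ = dim * μ (ball 0 1) * ENNReal.ofReal s := by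
  have hone := lintegral_mul_rayKernel μ measurable_one s
  simp only [Pi.one_apply, one_mul] at hone
  rw [hone, lintegral_const, setLIntegral_one, Real.volume_Ioc, sub_zero, μ.toSphere_apply_univ,
    mul_comm]

theorem lintegral_toSphere_lintegral_comp_mul_smul_le (hg : Measurable g)
    (hball : ∀ s > 0, ∫⁻ w in ball 0 s, g w ∂μ ≤ M * μ (ball 0 s)) {s : ℝ} (hs : 0 < s) :
    ∫⁻ ω : sphere (0 : E) 1, (∫⁻ t in Ioc (0 : ℝ) 1, g ((s * t) • (ω : E))) ∂μ.toSphere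
      ≤ M * (dim * μ (ball 0 1)) := by
  have hray : Measurable fun p : sphere (0 : E) 1 × ℝ => g (p.2 • (p.1 : E)) := by fun_prop
  calc ∫⁻ ω : sphere (0 : E) 1, (∫⁻ t in Ioc (0 : ℝ) 1, g ((s * t) • (ω : E))) ∂μ.toSphere
      = ∫⁻ ω : sphere (0 : E) 1,
          (ENNReal.ofReal s)⁻¹ * (∫⁻ u in Ioc (0 : ℝ) s, g (u • (ω : E))) ∂μ.toSphere :=
        lintegral_congr fun ω => by
          rw [setLIntegral_Ioc_comp_mul_left hs (h := fun u => g (u • (ω : E))) (by fun_prop),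
            mul_zero, mul_one]
    _ = (ENNReal.ofReal s)⁻¹ * ∫⁻ w, g w * ENNReal.ofReal (rayKernel dim s ‖w‖) ∂μ := by
        rw [lintegral_const_mul _ hray.lintegral_prod_right', lintegral_mul_rayKernel μ hg]
    _ ≤ (ENNReal.ofReal s)⁻¹ * (M * ∫⁻ w, ENNReal.ofReal (rayKernel dim s ‖w‖) ∂μ) := by
        gcongr
        exact lintegral_mul_radial_le μ hg hball (measurable_rayKernel _ _)
          (rayKernel_nonneg _ _) (antitoneOn_rayKernel _ _) fun _ => rayKernel_of_lt
    _ = M * (dim * μ (ball 0 1)) := by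
        rw [lintegral_rayKernel, show ∀ a b c : ℝ≥0∞,
            a⁻¹ * (M * (b * c * a)) = M * (b * c) * (a⁻¹ * a) by intros; ring,
          ENNReal.inv_mul_cancel (by simp [hs]) ENNReal.ofReal_ne_top, mul_one]

theorem lintegral_lintegral_comp_smul_mul_le (hg : Measurable g)
    (hball : ∀ s > 0, ∫⁻ w in ball 0 s, g w ∂μ ≤ M * μ (ball 0 s))
    {ρ : ℝ → ℝ≥0∞} (hρ : Measurable ρ) :
    ∫⁻ w, (∫⁻ t in Ioc (0 : ℝ) 1, g (t • w) * ρ ‖w‖) ∂μ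
      ≤ M * (dim * μ (ball 0 1)) * ∫⁻ s in Ioi (0 : ℝ), ρ s * ENNReal.ofReal (s ^ (dim - 1)) := by
  have hF : Measurable fun w : E => ∫⁻ t in Ioc (0 : ℝ) 1, g (t • w) * ρ ‖w‖ :=
    (show Measurable fun p : E × ℝ => g (p.2 • p.1) * ρ ‖p.1‖ by fun_prop).lintegral_prod_right'
  have hray : Measurable fun p : sphere (0 : E) 1 × ℝ =>
      ∫⁻ t in Ioc (0 : ℝ) 1, g ((p.2 * t) • (p.1 : E)) :=
    (show Measurable fun q : (sphere (0 : E) 1 × ℝ) × ℝ => g ((q.1.2 * q.2) • (q.1.1 : E)) by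
      fun_prop).lintegral_prod_right'
  rw [lintegral_eq_lintegral_toSphere μ hF]
  calc ∫⁻ ω : sphere (0 : E) 1, (∫⁻ s in Ioi (0 : ℝ), ENNReal.ofReal (s ^ (dim - 1)) *
          ∫⁻ t in Ioc (0 : ℝ) 1, g (t • s • (ω : E)) * ρ ‖s • (ω : E)‖) ∂μ.toSphere
      = ∫⁻ ω : sphere (0 : E) 1, (∫⁻ s in Ioi (0 : ℝ), ρ s * ENNReal.ofReal (s ^ (dim - 1)) *
          ∫⁻ t in Ioc (0 : ℝ) 1, g ((s * t) • (ω : E))) ∂μ.toSphere := by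
        refine lintegral_congr fun ω => setLIntegral_congr_fun measurableSet_Ioi fun s hs => ?_
        rw [norm_smul, norm_eq_of_mem_sphere ω, mul_one, Real.norm_of_nonneg (le_of_lt hs),
          lintegral_mul_const _ (by fun_prop : Measurable fun t : ℝ => g (t • s • (ω : E)))]
        simp_rw [smul_smul, mul_comm _ s]
        ring
    _ = ∫⁻ s in Ioi (0 : ℝ), ρ s * ENNReal.ofReal (s ^ (dim - 1)) *
          ∫⁻ ω : sphere (0 : E) 1, (∫⁻ t in Ioc (0 : ℝ) 1, g ((s * t) • (ω : E))) ∂μ.toSphere := by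
        rw [lintegral_lintegral_swap (by fun_prop)]
        exact lintegral_congr fun s =>
          lintegral_const_mul _ (hray.comp (measurable_id.prodMk measurable_const))
    _ ≤ ∫⁻ s in Ioi (0 : ℝ), ρ s * ENNReal.ofReal (s ^ (dim - 1)) * (M * (dim * μ (ball 0 1))) :=
        setLIntegral_mono' measurableSet_Ioi fun s hs => by
          gcongr
          exact lintegral_toSphere_lintegral_comp_mul_smul_le μ hg hball hs
    _ = M * (dim * μ (ball 0 1)) * ∫⁻ s in Ioi (0 : ℝ), ρ s * ENNReal.ofReal (s ^ (dim - 1)) := by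
        rw [lintegral_mul_const _ (by fun_prop), mul_comm]

end Polar

theorem setLIntegral_ball_zero_le_maxFn_mul {N : ℕ} {f : EuclideanSpace ℝ (Fin N) → ℂ}
    {g : EuclideanSpace ℝ (Fin N) → ℝ≥0∞} (hfg : (fun y => (‖f y‖₊ : ℝ≥0∞)) =ᵐ[volume] g)
    (x : EuclideanSpace ℝ (Fin N)) {s : ℝ} (hs : 0 < s) :
    ∫⁻ w in ball 0 s, g (x + w) ≤ maxFn f x * volume (ball (0 : EuclideanSpace ℝ (Fin N)) s) := by
  rw [← setLIntegral_ball_eq_setLIntegral_ball_zero, ← Measure.addHaar_ball_center volume x,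
    ← lintegral_congr_ae (ae_restrict_of_ae hfg), mul_comm,
    ← ENNReal.inv_mul_le_iff (measure_ball_pos _ x hs).ne' measure_ball_lt_top.ne]
  exact le_iSup₂ (f := fun s (_ : 0 < s) =>
    (volume (ball x s))⁻¹ * ∫⁻ y in ball x s, (‖f y‖₊ : ℝ≥0∞)) s hs

/-- maximal function bound for averaged radial integrals. -/
theorem maximal_bound (N : ℕ) (hN : 1 ≤ N) :
    ∃ C : ℝ, 0 < C ∧
      ∀ f : EuclideanSpace ℝ (Fin N) → ℂ,
        LocallyIntegrable f (volume : Measure (EuclideanSpace ℝ (Fin N))) →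
        ∀ r : ℝ, 0 < r →
        ∀ ρ : ℝ → ℝ, Measurable ρ → (∀ s ∈ Set.Ioi (0:ℝ), 0 ≤ ρ s) →
          (∫ s in Set.Ioi (0:ℝ), ρ s * s ^ (N - 1)) = 1 →
          ∀ᵐ x : EuclideanSpace ℝ (Fin N),
            (∫⁻ y in ball x r,
                ∫⁻ t in Set.Ioc (0:ℝ) 1,
                  (‖f (x + t • (y - x))‖₊ : ℝ≥0∞) * ENNReal.ofReal (ρ ‖y - x‖))
              ≤ ENNReal.ofReal C * maxFn f x := by
  have : Nontrivial (EuclideanSpace ℝ (Fin N)) :=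
    Module.nontrivial_of_finrank_pos (R := ℝ) (by rw [finrank_euclideanSpace_fin]; omega)
  set B := volume (ball (0 : EuclideanSpace ℝ (Fin N)) 1)
  refine ⟨N * B.toReal, mul_pos (by exact_mod_cast hN)
    (ENNReal.toReal_pos (measure_ball_pos _ _ one_pos).ne' measure_ball_lt_top.ne),
    fun f hf r _ ρ hρm hρ0 hρ1 => ?_⟩
  -- Enlarging `‖f‖₊` on a null set makes it measurable without changing any ball average.
  obtain ⟨g, hgm, hfg, hfg_ae⟩ :=
    hf.aestronglyMeasurable.nnnorm.aemeasurable.coe_nnreal_ennreal.exists_measurable_ge_ae_eq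
  have hρ : ∫⁻ s in Ioi (0 : ℝ), ENNReal.ofReal (ρ s) * ENNReal.ofReal (s ^ (N - 1)) = 1 := by
    rw [← lintegral_ofReal_eq_one_of_integral_eq_one ((ae_restrict_mem measurableSet_Ioi).mono
      fun s hs => mul_nonneg (hρ0 s hs) (pow_nonneg (le_of_lt hs) _)) hρ1]
    exact setLIntegral_congr_fun measurableSet_Ioi fun s hs => (ENNReal.ofReal_mul (hρ0 s hs)).symm
  refine ae_of_all _ fun x => ?_
  calc (∫⁻ y in ball x r, ∫⁻ t in Ioc (0 : ℝ) 1,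
          (‖f (x + t • (y - x))‖₊ : ℝ≥0∞) * ENNReal.ofReal (ρ ‖y - x‖))
      ≤ ∫⁻ w in ball (0 : EuclideanSpace ℝ (Fin N)) r, ∫⁻ t in Ioc (0 : ℝ) 1,
          g (x + t • w) * ENNReal.ofReal (ρ ‖w‖) := by
        rw [setLIntegral_ball_eq_setLIntegral_ball_zero]
        simp only [add_sub_cancel_left]
        gcongr with w t
        exact hfg _
    _ ≤ ∫⁻ w, ∫⁻ t in Ioc (0 : ℝ) 1, g (x + t • w) * ENNReal.ofReal (ρ ‖w‖) :=
        setLIntegral_le_lintegral _ _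
    _ ≤ maxFn f x * (N * B) *
          ∫⁻ s in Ioi (0 : ℝ), ENNReal.ofReal (ρ s) * ENNReal.ofReal (s ^ (N - 1)) := by
        simpa only [finrank_euclideanSpace_fin, Function.comp_apply] using
          lintegral_lintegral_comp_smul_mul_le volume (hgm.comp (measurable_const_add x))
            (fun s => setLIntegral_ball_zero_le_maxFn_mul hfg_ae x) hρm.ennreal_ofReal
    _ = ENNReal.ofReal (N * B.toReal) * maxFn f x := by
        rw [hρ, mul_one, ENNReal.ofReal_mul (Nat.cast_nonneg _), ENNReal.ofReal_natCast,
          ENNReal.ofReal_toReal measure_ball_lt_top.ne, mul_comm]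
end
end

section
/- Let N ≥ 1, let A : ℝ^N → ℝ^N be Lipschitz with Lipschitz constant L, and let u : ℝ^N → ℂ be continuously differentiable with compact support. Then for every x ∈ ℝ^N and every h > 0, |Ψ_u(x, x + h e_N) − Ψ_u(x, x)| ≤ h · M_{e_N}(|∇u − iAu|, x) + h² · L · M_{e_N}(|u|, x), where e_N = (0,…,0,1), ∇u is the classical gradient of u, and for σ ∈ S^{N−1} and a measurable g : ℝ^N → [0,∞), M_σ(g, x) := sup_{t>0} (1/t) ∫_0^t g(x + sσ) ds. -/
open MeasureTheory Filter Complex Metric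
open scoped ENNReal NNReal Topology

noncomputable section

/-- `Ψ_u(x,y) = e^{i (x-y)·A((x+y)/2)} u(y)`. -/
def Psi {N : ℕ} (A : EuclideanSpace ℝ (Fin N) → EuclideanSpace ℝ (Fin N))
    (u : EuclideanSpace ℝ (Fin N) → ℂ) (x y : EuclideanSpace ℝ (Fin N)) : ℂ :=
  Complex.exp (Complex.I *
    Complex.ofReal (inner ℝ (x - y) (A ((2:ℝ)⁻¹ • (x + y))) : ℝ)) * u y

/-- A sequence of nonnegative radial mollifiers: `∫_0^∞ ρ_n(r) r^{N-1} dr = 1` and the mass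
concentrates at the origin. -/
def IsMollifierSeq (N : ℕ) (ρ : ℕ → ℝ → ℝ) : Prop :=
  (∀ n, Measurable (ρ n)) ∧
  (∀ n, ∀ r ∈ Set.Ioi (0:ℝ), 0 ≤ ρ n r) ∧
  (∀ n, ∫ r in Set.Ioi (0:ℝ), ρ n r * r ^ (N - 1) = 1) ∧
  (∀ δ : ℝ, 0 < δ →
    Tendsto (fun n => ∫ r in Set.Ioi δ, ρ n r * r ^ (N - 1)) atTop (𝓝 0))

/-- `G` is the weak magnetic gradient `∇u - iAu` of `u` (in the sense of distributions). -/
def IsWeakMagGrad {N : ℕ} (A : EuclideanSpace ℝ (Fin N) → EuclideanSpace ℝ (Fin N))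
    (u : EuclideanSpace ℝ (Fin N) → ℂ)
    (G : EuclideanSpace ℝ (Fin N) → EuclideanSpace ℂ (Fin N)) : Prop :=
  ∀ φ : EuclideanSpace ℝ (Fin N) → ℂ, ContDiff ℝ (⊤ : ℕ∞) φ → HasCompactSupport φ →
    ∀ j : Fin N,
      ∫ x, u x * fderiv ℝ φ x (EuclideanSpace.single j 1) =
        - ∫ x, (G x j + Complex.I * Complex.ofReal (A x j) * u x) * φ x

/-- The double integral `∬ |Ψ_u(x,y) - Ψ_u(x,x)|²/|x-y|² ρ(|x-y|) dx dy`. -/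
def BBM {N : ℕ} (A : EuclideanSpace ℝ (Fin N) → EuclideanSpace ℝ (Fin N))
    (u : EuclideanSpace ℝ (Fin N) → ℂ) (ρn : ℝ → ℝ) : ℝ≥0∞ :=
  ∫⁻ q : EuclideanSpace ℝ (Fin N) × EuclideanSpace ℝ (Fin N),
    ENNReal.ofReal
      (‖Psi A u q.1 q.2 - Psi A u q.1 q.1‖ ^ 2 / ‖q.1 - q.2‖ ^ 2 * ρn ‖q.1 - q.2‖)

/-- `Q_N = (1/2) ∫_{S^{N-1}} |ω·σ|² dσ`, the surface measure on the unit sphere being the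
`(N-1)`-dimensional Hausdorff measure. -/
def QN (N : ℕ) (ω : EuclideanSpace ℝ (Fin N)) : ℝ :=
  (1/2 : ℝ) * ∫ σ in sphere (0 : EuclideanSpace ℝ (Fin N)) 1, (inner ℝ ω σ : ℝ) ^ 2
    ∂(Measure.hausdorffMeasure ((N : ℝ) - 1))

/-- The classical magnetic gradient `∇u - iAu` (componentwise directional derivatives). -/
def magGrad {N : ℕ} (A : EuclideanSpace ℝ (Fin N) → EuclideanSpace ℝ (Fin N))
    (u : EuclideanSpace ℝ (Fin N) → ℂ) (x : EuclideanSpace ℝ (Fin N)) :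
    EuclideanSpace ℂ (Fin N) :=
  (WithLp.equiv 2 (Fin N → ℂ)).symm fun j =>
    fderiv ℝ u x (EuclideanSpace.single j 1) - Complex.I * Complex.ofReal (A x j) * u x

/-- The directional maximal function `M_σ(g,x) = sup_{t>0} (1/t) ∫_0^t g(x + sσ) ds`. -/
def dirMax {N : ℕ} (σ : EuclideanSpace ℝ (Fin N)) (g : EuclideanSpace ℝ (Fin N) → ℝ)
    (x : EuclideanSpace ℝ (Fin N)) : ℝ :=
  ⨆ t : Set.Ioi (0:ℝ), (1 / (t : ℝ)) * ∫ s in Set.Ioc (0:ℝ) (t : ℝ), g (x + s • σ)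

private lemma euclid_comp_norm_le {𝕜 : Type*} [RCLike 𝕜] {ι : Type*} [Fintype ι] [DecidableEq ι]
    (v : EuclideanSpace 𝕜 ι) (j : ι) : ‖v j‖ ≤ ‖v‖ := by
  have h := norm_inner_le_norm (𝕜 := 𝕜) (EuclideanSpace.single j (1:𝕜)) v
  simpa [EuclideanSpace.inner_single_left] using h

private lemma integral_le_mul_dirMax {N : ℕ} (σ : EuclideanSpace ℝ (Fin N))
    (g : EuclideanSpace ℝ (Fin N) → ℝ) (x : EuclideanSpace ℝ (Fin N))
    (hg : Continuous g) (C : ℝ) (hC : ∀ z, g z ≤ C)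
    {h : ℝ} (hh : 0 < h) :
    ∫ s in Set.Ioc (0:ℝ) h, g (x + s • σ) ≤ h * dirMax σ g x := by
  have hline : ∀ t : ℝ, 0 < t → IntegrableOn (fun s => g (x + s • σ)) (Set.Ioc 0 t) volume := by
    intro t _
    exact (hg.comp (by continuity)).integrableOn_Ioc
  have hb : BddAbove (Set.range fun t : Set.Ioi (0:ℝ) =>
      (1/(t:ℝ)) * ∫ s in Set.Ioc (0:ℝ) (t:ℝ), g (x + s • σ)) := by
    refine ⟨C, ?_⟩
    rintro r ⟨⟨t, ht⟩, rfl⟩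
    have ht' : (0:ℝ) < t := ht
    have h1 : (∫ s in Set.Ioc (0:ℝ) t, g (x + s • σ)) ≤ ∫ _ in Set.Ioc (0:ℝ) t, C := by
      refine setIntegral_mono_on (hline t ht') (integrableOn_const ?_ (by simp))
        measurableSet_Ioc (fun s _ => hC _)
      simp [Real.volume_Ioc]
    have h2 : (∫ _ in Set.Ioc (0:ℝ) t, C) = t * C := by
      simp [Real.volume_Ioc, ht'.le, ENNReal.toReal_ofReal, smul_eq_mul]
    simp only
    calc (1/t) * (∫ s in Set.Ioc (0:ℝ) t, g (x + s • σ)) ≤ (1/t) * (t * C) := by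
          exact mul_le_mul_of_nonneg_left (h1.trans_eq h2) (by positivity)
      _ = C := by field_simp
  have key : (1/h) * (∫ s in Set.Ioc (0:ℝ) h, g (x + s • σ)) ≤ dirMax σ g x := by
    rw [dirMax]
    exact le_ciSup hb ⟨h, hh⟩
  have := mul_le_mul_of_nonneg_left key hh.le
  calc (∫ s in Set.Ioc (0:ℝ) h, g (x + s • σ))
      = h * ((1/h) * (∫ s in Set.Ioc (0:ℝ) h, g (x + s • σ))) := by field_simp
    _ ≤ h * dirMax σ g x := this

private lemma psi_increment_bound_aux {N : ℕ}
    (A : EuclideanSpace ℝ (Fin N) → EuclideanSpace ℝ (Fin N)) (L : ℝ≥0)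
    (hA : LipschitzWith L A)
    (u : EuclideanSpace ℝ (Fin N) → ℂ)
    (hu : ContDiff ℝ 1 u) (hsupp : HasCompactSupport u)
    (j : Fin N) (x : EuclideanSpace ℝ (Fin N)) (h : ℝ) (hh : 0 < h) :
    ‖Psi A u x (x + h • EuclideanSpace.single j (1:ℝ)) - Psi A u x x‖ ≤
      h * dirMax (EuclideanSpace.single j (1:ℝ)) (fun z => ‖magGrad A u z‖) x
        + h ^ 2 * (L : ℝ) *
          dirMax (EuclideanSpace.single j (1:ℝ)) (fun z => ‖u z‖) x := by
  set σ : EuclideanSpace ℝ (Fin N) := EuclideanSpace.single j (1:ℝ) with hσ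
  have hσ1 : ‖σ‖ = 1 := by simp [hσ]
  have hud : Differentiable ℝ u := hu.differentiable one_ne_zero
  have hfc : Continuous (fderiv ℝ u) := hu.continuous_fderiv one_ne_zero
  set b : ℝ := A (x + (h/2) • σ) j with hb
  set c : ℂ := -(Complex.I * (b:ℂ)) with hc
  set G : ℝ → ℂ := fun s => Complex.exp (c * (s:ℂ)) * u (x + s • σ) with hG
  have hlcont : Continuous (fun s : ℝ => x + s • σ) := by continuity
  -- Psi identities
  have hP0 : Psi A u x x = G 0 := by
    simp [Psi, hG]
  have hPh : Psi A u x (x + h • σ) = G h := by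
    have hmid : (2:ℝ)⁻¹ • (x + (x + h • σ)) = x + (h/2) • σ := by
      module
    have hip : (inner ℝ (x - (x + h • σ)) (A (x + (h/2) • σ)) : ℝ) = -(h * b) := by
      have hx0 : x - (x + h • σ) = (-h) • σ := by module
      rw [hx0, real_inner_smul_left]
      have : (inner ℝ σ (A (x + (h/2) • σ)) : ℝ) = b := by
        rw [hσ, EuclideanSpace.inner_single_left]
        simp [hb]
        rfl
      rw [this]; ring
    rw [Psi, hmid, hip, hG]
    push_cast
    ring_nf
    rw [hc]
    ring_nf
  -- derivative of G
  set D : ℝ → ℂ := fun s =>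
    Complex.exp (c * (s:ℂ)) * (c * u (x + s • σ) + fderiv ℝ u (x + s • σ) σ) with hD
  have hGderiv : ∀ s : ℝ, HasDerivAt G (D s) s := by
    intro s
    have hexp : HasDerivAt (fun s : ℝ => Complex.exp (c * (s:ℂ)))
        (Complex.exp (c * (s:ℂ)) * c) s := by
      have he : HasDerivAt (fun z : ℂ => Complex.exp (c * z))
          (Complex.exp (c * (s:ℂ)) * c) (s:ℂ) := by
        simpa [mul_comm] using ((hasDerivAt_id (s:ℂ)).const_mul c).cexp
      exact he.comp_ofReal
    have hlined : HasDerivAt (fun s : ℝ => x + s • σ) σ s := by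
      simpa using ((hasDerivAt_id s).smul_const σ).const_add x
    have hU : HasDerivAt (fun s : ℝ => u (x + s • σ)) (fderiv ℝ u (x + s • σ) σ) s :=
      (hud (x + s • σ)).hasFDerivAt.comp_hasDerivAt s hlined
    have := hexp.mul hU
    have hDs : D s = Complex.exp (c * (s:ℂ)) * c * u (x + s • σ)
        + Complex.exp (c * (s:ℂ)) * fderiv ℝ u (x + s • σ) σ := by
      rw [hD]
      ring
    rw [hDs]
    exact this
  have hDcont : Continuous D := by
    apply ((Complex.continuous_exp.comp (continuous_const.mul Complex.continuous_ofReal))).mul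
    exact (continuous_const.mul (hu.continuous.comp hlcont)).add
      ((hfc.comp hlcont).clm_apply continuous_const)
  -- FTC
  have hftc : G h - G 0 = ∫ s in (0:ℝ)..h, D s :=
    (intervalIntegral.integral_eq_sub_of_hasDerivAt (fun s _ => hGderiv s)
      (hDcont.intervalIntegrable 0 h)).symm
  -- pointwise bound
  have hbound : ∀ s ∈ Set.Ioc (0:ℝ) h,
      ‖D s‖ ≤ ‖magGrad A u (x + s • σ)‖ + (L : ℝ) * h * ‖u (x + s • σ)‖ := by
    intro s hs
    set y : EuclideanSpace ℝ (Fin N) := x + s • σ with hy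
    have h1 : ‖D s‖ = ‖c * u y + fderiv ℝ u y σ‖ := by
      rw [hD]
      simp only [norm_mul]
      have : ‖Complex.exp (c * (s:ℂ))‖ = 1 := by
        rw [Complex.norm_exp]
        simp [hc]
      rw [this, one_mul]
    have hsplit : c * u y + fderiv ℝ u y σ =
        (fderiv ℝ u y (EuclideanSpace.single j (1:ℝ))
          - Complex.I * Complex.ofReal (A y j) * u y)
        + Complex.I * Complex.ofReal (A y j - b) * u y := by
      rw [hc, hσ]
      push_cast
      ring
    have hcomp : ‖fderiv ℝ u y (EuclideanSpace.single j (1:ℝ))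
        - Complex.I * Complex.ofReal (A y j) * u y‖ ≤ ‖magGrad A u y‖ := by
      have := euclid_comp_norm_le (magGrad A u y) j
      exact this
    have hAdiff : |A y j - b| ≤ (L : ℝ) * h := by
      have h3 : |A y j - b| ≤ ‖A y - A (x + (h/2) • σ)‖ := by
        have := euclid_comp_norm_le (𝕜 := ℝ) (A y - A (x + (h/2) • σ)) j
        simpa [hb, Real.norm_eq_abs] using this
      have h4 : ‖A y - A (x + (h/2) • σ)‖ ≤ (L : ℝ) * ‖y - (x + (h/2) • σ)‖ := by
        have := hA.dist_le_mul y (x + (h/2) • σ)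
        simpa [dist_eq_norm] using this
      have h5 : y - (x + (h/2) • σ) = (s - h/2) • σ := by rw [hy]; module
      have h6 : ‖y - (x + (h/2) • σ)‖ ≤ h := by
        rw [h5, norm_smul, hσ1, mul_one, Real.norm_eq_abs]
        rw [abs_le]
        constructor <;> [linarith [hs.1.le, hs.2]; linarith [hs.1.le, hs.2]]
      calc |A y j - b| ≤ (L : ℝ) * ‖y - (x + (h/2) • σ)‖ := h3.trans h4
        _ ≤ (L : ℝ) * h := mul_le_mul_of_nonneg_left h6 L.coe_nonneg
    calc ‖D s‖ = ‖_ + _‖ := by rw [h1, hsplit]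
      _ ≤ ‖fderiv ℝ u y (EuclideanSpace.single j (1:ℝ))
            - Complex.I * Complex.ofReal (A y j) * u y‖
          + ‖Complex.I * Complex.ofReal (A y j - b) * u y‖ := norm_add_le _ _
      _ ≤ ‖magGrad A u y‖ + (L : ℝ) * h * ‖u y‖ := by
          apply add_le_add hcomp
          rw [norm_mul, norm_mul]
          simp only [Complex.norm_I, one_mul, Complex.norm_real, Real.norm_eq_abs]
          exact mul_le_mul_of_nonneg_right hAdiff (norm_nonneg _)
  -- continuity and compact support of magGrad
  have hmgcont : Continuous (magGrad A u) := by
    unfold magGrad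
    apply (PiLp.continuous_toLp 2 (fun _ : Fin N => ℂ)).comp
    apply continuous_pi
    intro k
    exact (hfc.clm_apply continuous_const).sub
      ((continuous_const.mul (Complex.continuous_ofReal.comp
        ((EuclideanSpace.proj k).continuous.comp hA.continuous))).mul hu.continuous)
  have hmgsupp : HasCompactSupport (magGrad A u) := by
    apply hsupp.mono'
    intro z hz
    by_contra hzu
    apply hz
    have hu0 : u z = 0 := image_eq_zero_of_notMem_tsupport hzu
    have hf0 : fderiv ℝ u z = 0 := by
      by_contra hne
      exact hzu (support_fderiv_subset ℝ hne)
    show magGrad A u z = 0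
    unfold magGrad
    rw [hf0, hu0]
    ext k
    simp
  obtain ⟨C1, hC1⟩ := hmgsupp.exists_bound_of_continuous hmgcont
  obtain ⟨C2, hC2⟩ := hsupp.exists_bound_of_continuous hu.continuous
  -- integrability of the bounding functions
  have hint1 : IntegrableOn (fun s => ‖magGrad A u (x + s • σ)‖) (Set.Ioc 0 h) volume :=
    ((hmgcont.norm).comp hlcont).integrableOn_Ioc
  have hint2 : IntegrableOn (fun s => (L:ℝ) * h * ‖u (x + s • σ)‖) (Set.Ioc 0 h) volume :=
    (continuous_const.mul ((hu.continuous.norm).comp hlcont)).integrableOn_Ioc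
  -- main estimate
  have key : ‖G h - G 0‖ ≤
      (∫ s in Set.Ioc (0:ℝ) h, ‖magGrad A u (x + s • σ)‖)
      + (L:ℝ) * h * (∫ s in Set.Ioc (0:ℝ) h, ‖u (x + s • σ)‖) := by
    rw [hftc, intervalIntegral.integral_of_le hh.le]
    calc ‖∫ s in Set.Ioc (0:ℝ) h, D s‖
        ≤ ∫ s in Set.Ioc (0:ℝ) h, ‖D s‖ := norm_integral_le_integral_norm _
      _ ≤ ∫ s in Set.Ioc (0:ℝ) h,
            (‖magGrad A u (x + s • σ)‖ + (L:ℝ) * h * ‖u (x + s • σ)‖) :=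
          setIntegral_mono_on ((hDcont.norm).integrableOn_Ioc)
            (hint1.add hint2) measurableSet_Ioc hbound
      _ = (∫ s in Set.Ioc (0:ℝ) h, ‖magGrad A u (x + s • σ)‖)
          + (L:ℝ) * h * (∫ s in Set.Ioc (0:ℝ) h, ‖u (x + s • σ)‖) := by
          rw [integral_add hint1 hint2, integral_const_mul]
  -- apply maximal-function bounds
  have hd1 : (∫ s in Set.Ioc (0:ℝ) h, ‖magGrad A u (x + s • σ)‖)
      ≤ h * dirMax σ (fun z => ‖magGrad A u z‖) x :=
    integral_le_mul_dirMax σ _ x hmgcont.norm C1 hC1 hh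
  have hd2 : (∫ s in Set.Ioc (0:ℝ) h, ‖u (x + s • σ)‖)
      ≤ h * dirMax σ (fun z => ‖u z‖) x :=
    integral_le_mul_dirMax σ _ x hu.continuous.norm C2 hC2 hh
  rw [hPh, hP0]
  calc ‖G h - G 0‖
      ≤ (∫ s in Set.Ioc (0:ℝ) h, ‖magGrad A u (x + s • σ)‖)
        + (L:ℝ) * h * (∫ s in Set.Ioc (0:ℝ) h, ‖u (x + s • σ)‖) := key
    _ ≤ h * dirMax σ (fun z => ‖magGrad A u z‖) x
        + (L:ℝ) * h * (h * dirMax σ (fun z => ‖u z‖) x) := by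
        refine add_le_add hd1 ?_
        exact mul_le_mul_of_nonneg_left hd2 (by positivity)
    _ = h * dirMax σ (fun z => ‖magGrad A u z‖) x
        + h ^ 2 * (L:ℝ) * dirMax σ (fun z => ‖u z‖) x := by ring

/-- pointwise bound on the increments of `Ψ_u` in the direction `e_N` by
directional maximal functions. -/
theorem psi_increment_bound (N : ℕ) (hN : 1 ≤ N)
    (A : EuclideanSpace ℝ (Fin N) → EuclideanSpace ℝ (Fin N)) (L : ℝ≥0)
    (hA : LipschitzWith L A)
    (u : EuclideanSpace ℝ (Fin N) → ℂ)
    (hu : ContDiff ℝ 1 u) (hsupp : HasCompactSupport u)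
    (x : EuclideanSpace ℝ (Fin N)) (h : ℝ) (hh : 0 < h) :
    ‖Psi A u x (x + h • EuclideanSpace.single (⟨N - 1, by omega⟩ : Fin N) (1:ℝ)) -
        Psi A u x x‖ ≤
      h * dirMax (EuclideanSpace.single (⟨N - 1, by omega⟩ : Fin N) (1:ℝ))
          (fun z => ‖magGrad A u z‖) x
        + h ^ 2 * (L : ℝ) *
          dirMax (EuclideanSpace.single (⟨N - 1, by omega⟩ : Fin N) (1:ℝ))
            (fun z => ‖u z‖) x :=
  psi_increment_bound_aux A L hA u hu hsupp _ x h hh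
end
end
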